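/- arXiv:2503.12475 — 8 statements merged into one kernel-verified Lean document; each statement's English description precedes it below -/
import Mathlib

section
/- Given a morphism of distinguished triangles (f, g, h) from X --x--> Y --y--> Z --z--> X[1] to X' --x'--> Y' --y'--> Z' --z'--> X'[1] in a pre-triangulated category, the morphism f factors through x if and only if h factors through y'. -/
open CategoryTheory CategoryTheory.Limits CategoryTheory.Pretriangulated

universe v u

variable {C : Type u} [Category.{v} C] [Preadditive C] [HasZeroObject C]
  [HasShift C ℤ] [∀ n : ℤ, (CategoryTheory.shiftFunctor C n).Additive]
  [Pretriangulated C]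

/-- Given a morphism `(f, g, h)` of distinguished triangles, `f` factors through `x`
iff `h` factors through `y'`. -/
theorem factor_iff_factor_of_triangle_morphism {X Y Z X' Y' Z' : C}
    (x : X ⟶ Y) (y : Y ⟶ Z) (z : Z ⟶ X⟦(1:ℤ)⟧)
    (x' : X' ⟶ Y') (y' : Y' ⟶ Z') (z' : Z' ⟶ X'⟦(1:ℤ)⟧)
    (hT : Triangle.mk x y z ∈ distTriang C)
    (hT' : Triangle.mk x' y' z' ∈ distTriang C)
    (f : X ⟶ X') (g : Y ⟶ Y') (h : Z ⟶ Z')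
    (comm₁ : x ≫ g = f ≫ x') (comm₂ : y ≫ h = g ≫ y')
    (comm₃ : z ≫ (CategoryTheory.shiftFunctor C (1:ℤ)).map f = h ≫ z') :
    (∃ r : Y ⟶ X', f = x ≫ r) ↔ (∃ s : Z ⟶ Y', h = s ≫ y') := by
  constructor
  · rintro ⟨r, rfl⟩
    refine Triangle.coyoneda_exact₃ _ hT' h ?_
    have h31 : z ≫ (shiftFunctor C (1:ℤ)).map x = 0 := comp_distTriang_mor_zero₃₁ _ hT
    show h ≫ z' = 0
    rw [← comm₃, Functor.map_comp, ← Category.assoc,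
      h31, zero_comp]
  · rintro ⟨s, rfl⟩
    have h23 : y' ≫ z' = 0 := comp_distTriang_mor_zero₂₃ _ hT'
    have hz : z ≫ (shiftFunctor C (1:ℤ)).map f = 0 := by
      rw [comm₃, Category.assoc, h23, comp_zero]
    obtain ⟨g₁, hg₁⟩ := Triangle.yoneda_exact₃ _ (rot_of_distTriang _ hT)
      ((shiftFunctor C (1:ℤ)).map f) hz
    obtain ⟨r, hr⟩ : ∃ r : Y ⟶ X', (shiftFunctor C (1:ℤ)).map r = g₁ := (shiftFunctor C (1:ℤ)).map_surjective g₁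
    refine ⟨-r, (shiftFunctor C (1:ℤ)).map_injective ?_⟩
    refine hg₁.trans ?_
    rw [← hr]
    simp [Triangle.rotate]
    exact Preadditive.neg_comp _ _
end

section
/- Let ξ be a proper class of triangles in a triangulated category T. If ξ is closed under rotations (i.e., whenever X --u--> Y --v--> Z --w--> X[1] is in ξ, the rotated triangle Y --v--> Z --w--> X[1] ---u[1]--> Y[1] is also in ξ), then ξ equals the class of all distinguished triangles. -/
open CategoryTheory CategoryTheory.Limits CategoryTheory.Pretriangulated

universe v u

variable {C : Type u} [Category.{v} C] [Preadditive C] [HasZeroObject C]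
  [HasShift C ℤ] [∀ n : ℤ, (CategoryTheory.shiftFunctor C n).Additive]
  [Pretriangulated C] [HasBinaryBiproducts C]

namespace Paper


/-- A morphism `u : X ⟶ Y` is a `ξ`-proper monomorphism if it occurs as the first
morphism of a triangle in `ξ`. -/
def ProperMono (ξ : Set (Triangle C)) {X Y : C} (u : X ⟶ Y) : Prop :=
  ∃ (Z : C) (v : Y ⟶ Z) (w : Z ⟶ X⟦(1:ℤ)⟧), Triangle.mk u v w ∈ ξ

/-- A morphism `v : Y ⟶ Z` is a `ξ`-proper epimorphism if it occurs as the second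
morphism of a triangle in `ξ`. -/
def ProperEpi (ξ : Set (Triangle C)) {Y Z : C} (v : Y ⟶ Z) : Prop :=
  ∃ (W : C) (u : W ⟶ Y) (w : Z ⟶ W⟦(1:ℤ)⟧), Triangle.mk u v w ∈ ξ

/-- `ξ` is a proper class of triangles. -/
structure IsProperClass (ξ : Set (Triangle C)) : Prop where
  le_dist : ∀ T ∈ ξ, T ∈ distTriang C
  split_mem : ∀ T ∈ distTriang C, T.mor₃ = 0 → T ∈ ξ
  iso_closed : ∀ T ∈ ξ, ∀ T' : Triangle C, Nonempty (T ≅ T') → T' ∈ ξ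
  shift_closed : ∀ T ∈ ξ, ∀ n : ℤ, (Triangle.shiftFunctor C n).obj T ∈ ξ
  coprod_closed : ∀ T₁ ∈ ξ, ∀ T₂ ∈ ξ,
    Triangle.mk (biprod.map T₁.mor₁ T₂.mor₁) (biprod.map T₁.mor₂ T₂.mor₂)
      (biprod.desc (T₁.mor₃ ≫ (CategoryTheory.shiftFunctor C (1:ℤ)).map biprod.inl)
        (T₂.mor₃ ≫ (CategoryTheory.shiftFunctor C (1:ℤ)).map biprod.inr)) ∈ ξ
  base_change : ∀ T ∈ ξ, ∀ {Z' : C} (α : Z' ⟶ T.obj₃) {Y' : C}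
    (u' : T.obj₁ ⟶ Y') (v' : Y' ⟶ Z'),
    (Triangle.mk u' v' (α ≫ T.mor₃) ∈ distTriang C) →
    Triangle.mk u' v' (α ≫ T.mor₃) ∈ ξ
  cobase_change : ∀ T ∈ ξ, ∀ {X' : C} (β : T.obj₁ ⟶ X') {Y' : C}
    (u' : X' ⟶ Y') (v' : Y' ⟶ T.obj₃),
    (Triangle.mk u' v' (T.mor₃ ≫ (CategoryTheory.shiftFunctor C (1:ℤ)).map β) ∈ distTriang C) →
    Triangle.mk u' v' (T.mor₃ ≫ (CategoryTheory.shiftFunctor C (1:ℤ)).map β) ∈ ξ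
  saturated : ∀ T ∈ distTriang C, ∀ {Z' : C} (α : Z' ⟶ T.obj₃) {Y' : C}
    (u' : T.obj₁ ⟶ Y') (v' : Y' ⟶ Z'),
    Triangle.mk u' v' (α ≫ T.mor₃) ∈ ξ →
    (∃ (X' : C) (β : X' ⟶ Z') (γ : T.obj₃ ⟶ X'⟦(1:ℤ)⟧), Triangle.mk β α γ ∈ ξ) →
    T ∈ ξ

/-- `Ext_ξ(A,B) = 0`: every triangle `B ⟶ E ⟶ A ⟶ B⟦1⟧` in `ξ` splits. -/
def ExtVanish (ξ : Set (Triangle C)) (A B : C) : Prop :=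
  ∀ (E : C) (c : B ⟶ E) (p : E ⟶ A) (w : A ⟶ B⟦(1:ℤ)⟧), Triangle.mk c p w ∈ ξ → w = 0

/-- The set of connecting morphisms of triangles `B ⟶ E ⟶ A ⟶ B⟦1⟧` in `ξ`,
realizing `Ext_ξ(A,B)` inside `Hom(A, B⟦1⟧)`. -/
def ExtSet (ξ : Set (Triangle C)) (A B : C) : Set (A ⟶ B⟦(1:ℤ)⟧) :=
  {w | ∃ (E : C) (c : B ⟶ E) (p : E ⟶ A), Triangle.mk c p w ∈ ξ}


open ZeroObject

/-- If a proper class of triangles is closed under rotations, it is the class of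
all distinguished triangles. -/
theorem eq_distTriang_of_rotation_closed [IsTriangulated C]
    (ξ : Set (Triangle C)) (hξ : IsProperClass ξ)
    (hrot : ∀ T ∈ ξ, T.rotate ∈ ξ) : ξ = distTriang C := by
  apply Set.Subset.antisymm (fun T hT => hξ.le_dist T hT)
  intro T hT
  have h1 : Triangle.mk (𝟙 T.obj₁) (0 : T.obj₁ ⟶ 0) (0 : (0:C) ⟶ T.obj₁⟦(1:ℤ)⟧) ∈ ξ :=
    hξ.split_mem _ (contractible_distinguished T.obj₁) rfl
  have h2 := hrot _ h1
  have key : (-T.mor₃) ≫ ((Triangle.mk (𝟙 T.obj₁) (0 : T.obj₁ ⟶ 0)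
      (0 : (0:C) ⟶ T.obj₁⟦(1:ℤ)⟧)).rotate).mor₃ = T.mor₃ := by
    simp [Triangle.rotate]
    show (-T.mor₃) ≫ (-(shiftFunctor C (1:ℤ)).map (𝟙 T.obj₁)) = T.mor₃
    simp
  have h3 := hξ.base_change _ h2 (-T.mor₃) T.mor₁ T.mor₂ (Eq.subst (motive := fun w => Triangle.mk T.mor₁ T.mor₂ w ∈ distTriang C) key.symm hT)
  replace h3 := Eq.subst (motive := fun w => Triangle.mk T.mor₁ T.mor₂ w ∈ ξ) key h3
  exact h3

end Paper
end

section
/- Let T be a triangulated category, A an abelian category, and F : T → A a cohomological functor. Then the class ξ(F) of all distinguished triangles X → Y → Z → X[1] such that for every integer i the sequence 0 → F(X[i]) → F(Y[i]) → F(Z[i]) → 0 is exact, is a proper class of triangles. -/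
open CategoryTheory CategoryTheory.Limits CategoryTheory.Pretriangulated

universe v u

variable {C : Type u} [Category.{v} C] [Preadditive C] [HasZeroObject C]
  [HasShift C ℤ] [∀ n : ℤ, (CategoryTheory.shiftFunctor C n).Additive]
  [Pretriangulated C] [HasBinaryBiproducts C]

namespace Paper


/-! ### Auxiliary material for the proof of `xiF_isProperClass` -/

/-- The binary direct sum of two distinguished triangles is distinguished. -/
noncomputable def biprodPiIso (T₁ T₂ : Triangle C) (P : Triangle C → C) :
    P T₁ ⊞ P T₂ ≅ ∏ᶜ (fun j => P (WalkingPair.casesOn j T₁ T₂)) where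
  hom := Pi.lift (fun j => match j with | .left => biprod.fst | .right => biprod.snd)
  inv := biprod.lift (Pi.π _ WalkingPair.left) (Pi.π _ WalkingPair.right)
  hom_inv_id := by apply biprod.hom_ext <;> simp
  inv_hom_id := by ext ⟨(_|_)⟩ <;> simp

lemma biprodTriangle_distinguished (T₁ T₂ : Triangle C)
    (h₁ : T₁ ∈ distTriang C) (h₂ : T₂ ∈ distTriang C) :
    Triangle.mk (biprod.map T₁.mor₁ T₂.mor₁) (biprod.map T₁.mor₂ T₂.mor₂)
      (biprod.desc (T₁.mor₃ ≫ (CategoryTheory.shiftFunctor C (1:ℤ)).map biprod.inl)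
        (T₂.mor₃ ≫ (CategoryTheory.shiftFunctor C (1:ℤ)).map biprod.inr)) ∈ distTriang C := by
  have hTs : ∀ j, (fun j => WalkingPair.casesOn j T₁ T₂ : WalkingPair → Triangle C) j
      ∈ distTriang C := by rintro (_|_) <;> assumption
  refine isomorphic_distinguished _ (productTriangle_distinguished _ hTs) _ ?_
  refine Triangle.isoMk _ _ (biprodPiIso T₁ T₂ (fun T => T.obj₁))
    (biprodPiIso T₁ T₂ (fun T => T.obj₂)) (biprodPiIso T₁ T₂ (fun T => T.obj₃)) ?_ ?_ ?_
  · dsimp [productTriangle, Triangle.mk]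
    ext ⟨(_|_)⟩ <;> simp [biprodPiIso]
  · dsimp [productTriangle, Triangle.mk]
    ext ⟨(_|_)⟩ <;> simp [biprodPiIso]
  · dsimp [productTriangle, Triangle.mk]
    rw [← cancel_mono (piComparison _ _)]
    simp only [Category.assoc, IsIso.inv_hom_id, Category.comp_id]
    ext ⟨(_|_)⟩ <;> simp [biprodPiIso, ← Functor.map_comp]

section HomologicalAux

variable {A : Type*} [Category A] [Abelian A]
  (F : C ⥤ A) [F.Additive] [F.IsHomological]

lemma map_shift_shift_zero {X Y : C} {f : X ⟶ Y}
    (H : ∀ i : ℤ, F.map ((shiftFunctor C i).map f) = 0) (a b : ℤ) :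
    F.map ((shiftFunctor C b).map ((shiftFunctor C a).map f)) = 0 := by
  have e := shiftFunctorAdd' C a b (a + b) rfl
  have h : (shiftFunctor C b).map ((shiftFunctor C a).map f) =
      e.inv.app X ≫ (shiftFunctor C (a + b)).map f ≫ e.hom.app Y := by
    rw [e.hom.naturality f, Iso.inv_hom_id_app_assoc]
    rfl
  rw [h, Functor.map_comp, Functor.map_comp, H, zero_comp, comp_zero]

lemma map_shift_conj_zero {X Y X' Y' : C} {f : X ⟶ Y}
    (H : ∀ i : ℤ, F.map ((shiftFunctor C i).map f) = 0)
    (a : X' ⟶ X) (b : Y ⟶ Y') (i : ℤ) :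
    F.map ((shiftFunctor C i).map (a ≫ f ≫ b)) = 0 := by
  simp only [Functor.map_comp, H i, zero_comp, comp_zero]

/-- The connecting morphism of the `i`-th shift of a triangle, after applying `F`. -/
lemma map_shiftTriangle_mor₃_zero (T : Triangle C)
    (H : ∀ i : ℤ, F.map ((shiftFunctor C i).map T.mor₃) = 0) (n : ℤ) :
    ∀ i : ℤ, F.map ((shiftFunctor C i).map ((Triangle.shiftFunctor C n).obj T).mor₃) = 0 := by
  intro i
  have h : ((Triangle.shiftFunctor C n).obj T).mor₃ =
      n.negOnePow • ((shiftFunctor C n).map T.mor₃ ≫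
        (shiftFunctorComm C 1 n).hom.app T.obj₁) := rfl
  erw [h, Units.smul_def, Functor.map_zsmul, Functor.map_zsmul, Functor.map_comp,
    Functor.map_comp, map_shift_shift_zero F H n i, zero_comp, smul_zero]

/-- Membership in `ξ(F)` is equivalent to distinguishedness together with the vanishing of
`F` on all shifts of the connecting morphism. -/
lemma mem_xiF_iff (T : Triangle C) :
    (T ∈ {T : Triangle C | (T ∈ distTriang C) ∧ ∀ i : ℤ,
      Mono (F.map ((Triangle.shiftFunctor C i).obj T).mor₁) ∧
      Epi (F.map ((Triangle.shiftFunctor C i).obj T).mor₂) ∧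
      ∀ (hzero : F.map ((Triangle.shiftFunctor C i).obj T).mor₁ ≫
          F.map ((Triangle.shiftFunctor C i).obj T).mor₂ = 0),
        (ShortComplex.mk _ _ hzero).Exact}) ↔
    ((T ∈ distTriang C) ∧ ∀ i : ℤ, F.map ((shiftFunctor C i).map T.mor₃) = 0) := by
  constructor
  · rintro ⟨hT, h⟩
    refine ⟨hT, fun i => ?_⟩
    have hTi : (Triangle.shiftFunctor C i).obj T ∈ distTriang C :=
      Triangle.shift_distinguished T hT i
    have hepi := (h i).2.1
    have hz : F.map ((Triangle.shiftFunctor C i).obj T).mor₂ ≫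
        F.map ((Triangle.shiftFunctor C i).obj T).mor₃ = 0 := by
      rw [← F.map_comp, comp_distTriang_mor_zero₂₃ _ hTi, F.map_zero]
    have h3 : F.map ((Triangle.shiftFunctor C i).obj T).mor₃ = 0 := by
      rw [← cancel_epi (F.map ((Triangle.shiftFunctor C i).obj T).mor₂), comp_zero]
      exact hz
    have hsmul : ((Triangle.shiftFunctor C i).obj T).mor₃ =
        i.negOnePow • ((shiftFunctor C i).map T.mor₃ ≫
          (shiftFunctorComm C 1 i).hom.app T.obj₁) := rfl
    erw [hsmul, Units.smul_def, Functor.map_zsmul, Functor.map_comp] at h3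
    have h4 : F.map ((shiftFunctor C i).map T.mor₃) ≫
        F.map ((shiftFunctorComm C 1 i).hom.app T.obj₁) = 0 := by
      have := congrArg (fun y => ((i.negOnePow)⁻¹ : ℤˣ) • y) h3
      simp only [Units.smul_def, smul_smul, ← Units.val_mul, Int.units_mul_self] at this
      simp at this
      exact this
    exact (cancel_mono (F.map ((shiftFunctorComm C 1 i).hom.app T.obj₁))).1
      (by rw [h4, zero_comp])
  · rintro ⟨hT, H⟩
    refine ⟨hT, fun i => ?_⟩
    have hTi : (Triangle.shiftFunctor C i).obj T ∈ distTriang C :=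
      Triangle.shift_distinguished T hT i
    have h3 : F.map ((Triangle.shiftFunctor C i).obj T).mor₃ = 0 := by
      have hsmul : ((Triangle.shiftFunctor C i).obj T).mor₃ =
          i.negOnePow • ((shiftFunctor C i).map T.mor₃ ≫
            (shiftFunctorComm C 1 i).hom.app T.obj₁) := rfl
      erw [hsmul, Units.smul_def, Functor.map_zsmul, Functor.map_comp, H i, zero_comp, smul_zero]
    refine ⟨?_, ?_, ?_⟩
    · -- Mono, via the inverse rotation
      have hinv := F.map_distinguished_exact _
        (inv_rot_of_distTriang _ hTi)
      have h0 : F.map ((Triangle.shiftFunctor C i).obj T).invRotate.mor₁ = 0 := by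
        have hm : ((Triangle.shiftFunctor C i).obj T).invRotate.mor₁ =
            -((shiftFunctor C (-1 : ℤ)).map ((Triangle.shiftFunctor C i).obj T).mor₃ ≫
              (shiftEquiv C (1:ℤ)).unitIso.inv.app _) := by
          simp [Triangle.invRotate]
          rfl
        have hshift : F.map ((shiftFunctor C (-1 : ℤ)).map
            ((Triangle.shiftFunctor C i).obj T).mor₃) = 0 :=
          map_shiftTriangle_mor₃_zero F T H i (-1)
        erw [hm, F.map_neg, F.map_comp, hshift, zero_comp, neg_zero]
      exact (F.map_distinguished_exact _ (inv_rot_of_distTriang _ hTi)).mono_g h0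
    · exact (F.map_distinguished_exact _ (rot_of_distTriang _ hTi)).epi_f h3
    · intro hzero
      exact F.map_distinguished_exact _ hTi

end HomologicalAux

/-- Epi is invariant under the action of a unit scalar. -/
lemma epi_units_zsmul_iff {D : Type*} [Category D] [Preadditive D] {X Y : D}
    (z : ℤˣ) (f : X ⟶ Y) : Epi ((z : ℤ) • f) ↔ Epi f := by
  have hiso : IsIso ((z : ℤ) • 𝟙 X) := by
    refine ⟨((z⁻¹ : ℤˣ) : ℤ) • 𝟙 X, ?_, ?_⟩ <;>
    · simp only [Preadditive.zsmul_comp, Preadditive.comp_zsmul, Category.comp_id, smul_smul]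
      norm_cast
      simp [← Units.val_mul]
  have h : (z : ℤ) • f = ((z : ℤ) • 𝟙 X) ≫ f := by
    simp [Preadditive.zsmul_comp]
  constructor
  · intro h'
    rw [h] at h'
    exact epi_of_epi ((z : ℤ) • 𝟙 X) f
  · intro h'
    rw [h]
    exact epi_comp _ _

/-- The class `ξ(F)` of triangles on which a cohomological functor `F` yields short
exact sequences in all degrees is a proper class of triangles. -/
theorem xiF_isProperClass [IsTriangulated C] {A : Type*} [Category A] [Abelian A]
    (F : C ⥤ A) [F.Additive] [F.IsHomological] :
    IsProperClass {T : Triangle C | (T ∈ distTriang C) ∧ ∀ i : ℤ,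
      Mono (F.map ((Triangle.shiftFunctor C i).obj T).mor₁) ∧
      Epi (F.map ((Triangle.shiftFunctor C i).obj T).mor₂) ∧
      ∀ (hzero : F.map ((Triangle.shiftFunctor C i).obj T).mor₁ ≫
          F.map ((Triangle.shiftFunctor C i).obj T).mor₂ = 0),
        (ShortComplex.mk _ _ hzero).Exact} := by
  constructor
  · exact fun T hT => hT.1
  · -- split triangles
    intro T hT h0
    rw [mem_xiF_iff]
    exact ⟨hT, fun i => by rw [h0]; simp⟩
  · -- closed under isomorphisms
    intro T hT T' ⟨e⟩
    rw [mem_xiF_iff] at hT ⊢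
    obtain ⟨hdist, H⟩ := hT
    refine ⟨isomorphic_distinguished _ hdist _ e.symm, fun i => ?_⟩
    have hc : T'.mor₃ = e.inv.hom₃ ≫ T.mor₃ ≫ (shiftFunctor C (1:ℤ)).map e.hom.hom₁ := by
      rw [← cancel_mono ((shiftFunctor C (1:ℤ)).map e.inv.hom₁), e.inv.comm₃]
      simp [← Functor.map_comp]
    rw [hc]
    exact map_shift_conj_zero F H _ _ i
  · -- closed under shifts
    intro T hT n
    rw [mem_xiF_iff] at hT ⊢
    exact ⟨Triangle.shift_distinguished T hT.1 n, map_shiftTriangle_mor₃_zero F T hT.2 n⟩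
  · -- closed under binary direct sums
    intro T₁ hT₁ T₂ hT₂
    rw [mem_xiF_iff] at hT₁ hT₂ ⊢
    refine ⟨biprodTriangle_distinguished T₁ T₂ hT₁.1 hT₂.1, fun i => ?_⟩
    have key : (Triangle.mk (biprod.map T₁.mor₁ T₂.mor₁) (biprod.map T₁.mor₂ T₂.mor₂)
        (biprod.desc (T₁.mor₃ ≫ (CategoryTheory.shiftFunctor C (1:ℤ)).map biprod.inl)
          (T₂.mor₃ ≫ (CategoryTheory.shiftFunctor C (1:ℤ)).map biprod.inr))).mor₃ =
        biprod.fst ≫ T₁.mor₃ ≫ (shiftFunctor C (1:ℤ)).map biprod.inl +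
        biprod.snd ≫ T₂.mor₃ ≫ (shiftFunctor C (1:ℤ)).map biprod.inr := by
      dsimp [Triangle.mk]
      ext <;> simp
    erw [key, Functor.map_add, Functor.map_add,
      map_shift_conj_zero F hT₁.2 _ _ i, map_shift_conj_zero F hT₂.2 _ _ i, add_zero]
  · -- base change
    intro T hT Z' α Y' u' v' hdist
    rw [mem_xiF_iff] at hT ⊢
    refine ⟨hdist, fun i => ?_⟩
    show F.map ((shiftFunctor C i).map (α ≫ T.mor₃)) = 0
    rw [Functor.map_comp, Functor.map_comp, hT.2 i, comp_zero]
  · -- cobase change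
    intro T hT X' β Y' u' v' hdist
    rw [mem_xiF_iff] at hT ⊢
    refine ⟨hdist, fun i => ?_⟩
    show F.map ((shiftFunctor C i).map (T.mor₃ ≫ (shiftFunctor C (1:ℤ)).map β)) = 0
    rw [Functor.map_comp, Functor.map_comp, hT.2 i, zero_comp]
  · -- saturation
    intro T hT Z' α Y' u' v' hT' hexists
    obtain ⟨X', β, γ, hT''⟩ := hexists
    rw [mem_xiF_iff] at hT' ⊢
    refine ⟨hT, fun i => ?_⟩
    -- `F.map ((shiftFunctor C i).map α)` is an epimorphism
    have hepi₀ := (hT''.2 i).2.1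
    have hmor₂ : ((Triangle.shiftFunctor C i).obj (Triangle.mk β α γ)).mor₂ =
        i.negOnePow • (shiftFunctor C i).map α := rfl
    erw [hmor₂, Units.smul_def, Functor.map_zsmul] at hepi₀
    have hepi : Epi (F.map ((shiftFunctor C i).map α)) :=
      (epi_units_zsmul_iff _ _).1 hepi₀
    have hz := hT'.2 i
    erw [show (Triangle.mk u' v' (α ≫ T.mor₃)).mor₃ = α ≫ T.mor₃ from rfl,
      Functor.map_comp, Functor.map_comp] at hz
    rw [← cancel_epi (F.map ((shiftFunctor C i).map α)), comp_zero]
    exact hz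

end Paper
end

section
/- Let ξ be a proper class of triangles in a triangulated category T. Then the class of ξ-proper monomorphisms is closed under composition: if u : X → Y and v : Y → Z are ξ-proper monomorphisms then so is v ∘ u. -/
open CategoryTheory CategoryTheory.Limits CategoryTheory.Pretriangulated

universe v u

variable {C : Type u} [Category.{v} C] [Preadditive C] [HasZeroObject C]
  [HasShift C ℤ] [∀ n : ℤ, (CategoryTheory.shiftFunctor C n).Additive]
  [Pretriangulated C] [HasBinaryBiproducts C]

namespace Paper


/-- `ξ`-proper monomorphisms are closed under composition. -/
theorem properMono_comp (ξ : Set (Triangle C)) (hξ : IsProperClass ξ)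
    {X Y Z : C} (u : X ⟶ Y) (v : Y ⟶ Z)
    (hu : ProperMono ξ u) (hv : ProperMono ξ v) : ProperMono ξ (u ≫ v) := by
  obtain ⟨Z₁₂, v₁₂, w₁₂, hTu⟩ := hu
  obtain ⟨Z₂₃, v₂₃, w₂₃, hTv⟩ := hv
  have hTu' : Triangle.mk u v₁₂ w₁₂ ∈ distTriang C := hξ.le_dist _ hTu
  have hTv' : Triangle.mk v v₂₃ w₂₃ ∈ distTriang C := hξ.le_dist _ hTv
  obtain ⟨Z₁₃, v₁₃, w₁₃, hT₁₃⟩ := distinguished_cocone_triangle (u ≫ v)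
  refine ⟨Z₁₃, v₁₃, w₁₃, ?_⟩
  -- Step 1: lift `w₁₃ ≫ u⟦1⟧` through `w₂₃`
  have hkill : (w₁₃ ≫ u⟦(1:ℤ)⟧') ≫ (Triangle.mk v v₂₃ w₂₃).mor₁⟦(1:ℤ)⟧' = 0 := by
    show (w₁₃ ≫ u⟦(1:ℤ)⟧') ≫ v⟦(1:ℤ)⟧' = 0
    rw [Category.assoc, ← Functor.map_comp]
    exact comp_distTriang_mor_zero₃₁ _ hT₁₃
  obtain ⟨m₃, hm₃⟩ := Triangle.coyoneda_exact₁ _ hTv' (w₁₃ ≫ u⟦(1:ℤ)⟧') hkill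
  -- Step 2: a ξ-triangle `Y ⟶ Q ⟶ Z₁₃` with connecting map `w₁₃ ≫ u⟦1⟧`
  obtain ⟨Q, q₁, q₂, hTq⟩ := distinguished_cocone_triangle₂ (w₁₃ ≫ u⟦(1:ℤ)⟧')
  have hTqξ : Triangle.mk q₁ q₂ (w₁₃ ≫ u⟦(1:ℤ)⟧') ∈ ξ := by
    rw [show w₁₃ ≫ u⟦(1:ℤ)⟧' = m₃ ≫ w₂₃ from hm₃] at hTq ⊢
    exact hξ.base_change _ hTv m₃ q₁ q₂ hTq
  -- Step 3: lift `q₂ ≫ w₁₃` through `w₁₂`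
  have hkill₂ : (q₂ ≫ w₁₃) ≫ (Triangle.mk u v₁₂ w₁₂).mor₁⟦(1:ℤ)⟧' = 0 := by
    show (q₂ ≫ w₁₃) ≫ u⟦(1:ℤ)⟧' = 0
    rw [Category.assoc]
    exact comp_distTriang_mor_zero₂₃ _ hTq
  obtain ⟨ρ, hρ⟩ := Triangle.coyoneda_exact₁ _ hTu' (q₂ ≫ w₁₃) hkill₂
  -- Step 4: a ξ-triangle `X ⟶ Y' ⟶ Q` with connecting map `q₂ ≫ w₁₃`
  obtain ⟨Y', u', v', hTp⟩ := distinguished_cocone_triangle₂ (q₂ ≫ w₁₃)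
  have hTpξ : Triangle.mk u' v' (q₂ ≫ w₁₃) ∈ ξ := by
    rw [show q₂ ≫ w₁₃ = ρ ≫ w₁₂ from hρ] at hTp ⊢
    exact hξ.base_change _ hTu ρ u' v' hTp
  -- Step 5: saturation
  exact hξ.saturated _ hT₁₃ q₂ u' v' hTpξ ⟨Y, q₁, w₁₃ ≫ u⟦(1:ℤ)⟧', hTqξ⟩

end Paper
end

section
/- Let ξ be a proper class of triangles in a triangulated category T and X, Y objects. Then Ext_ξ(X,Y) = 0 if and only if for every commutative diagram where A --i--> B --d--> X --u--> A[1] and Y --c--> C --p--> D --v--> Y[1] are triangles in ξ, and α : A → C, β : B → D satisfy β∘i = p∘α and the square with d, v commutes appropriately, there exists a lifting λ : B → C with λ∘i = α and p∘λ = β. -/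
open CategoryTheory CategoryTheory.Limits CategoryTheory.Pretriangulated

universe v u

variable {C : Type u} [Category.{v} C] [Preadditive C] [HasZeroObject C]
  [HasShift C ℤ] [∀ n : ℤ, (CategoryTheory.shiftFunctor C n).Additive]
  [Pretriangulated C] [HasBinaryBiproducts C]

namespace Paper


/-- Extension-Lifting Lemma: `Ext_ξ(X,Y) = 0` iff every commutative diagram of
triangles in `ξ` as in the statement admits a lifting. -/
theorem extension_lifting (ξ : Set (Triangle C)) (hξ : IsProperClass ξ) (X Y : C) :
    ExtVanish ξ X Y ↔
      ∀ {A B : C} (i : A ⟶ B) (d : B ⟶ X) (u : X ⟶ A⟦(1:ℤ)⟧),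
        Triangle.mk i d u ∈ ξ →
      ∀ {E D : C} (c : Y ⟶ E) (p : E ⟶ D) (v : D ⟶ Y⟦(1:ℤ)⟧),
        Triangle.mk c p v ∈ ξ →
      ∀ (α : A ⟶ E) (β : B ⟶ D), i ≫ β = α ≫ p →
        ∃ l : B ⟶ E, i ≫ l = α ∧ l ≫ p = β := by
  constructor
  · intro hv A B i d u hT₁ E D c p v hT₂ α β hcomm
    have hT₁d : Triangle.mk i d u ∈ distTriang C := hξ.le_dist _ hT₁
    have hT₂d : Triangle.mk c p v ∈ distTriang C := hξ.le_dist _ hT₂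
    -- Step A: factor β ≫ v through d
    obtain ⟨w, hw⟩ : ∃ w : X ⟶ Y⟦(1:ℤ)⟧, β ≫ v = d ≫ w := by
      apply Triangle.yoneda_exact₂ _ hT₁d (β ≫ v)
      have hpv : p ≫ v = 0 := comp_distTriang_mor_zero₂₃ _ hT₂d
      show i ≫ β ≫ v = 0
      rw [← Category.assoc, hcomm, Category.assoc, hpv, comp_zero]
    -- Step B: w = 0 via ExtVanish
    have hw0 : w = 0 := by
      obtain ⟨E₂, c₂, p₂, hmem₂⟩ := distinguished_cocone_triangle₂ w
      obtain ⟨F, c₃, p₃, hmem₃⟩ := distinguished_cocone_triangle₂ (β ≫ v)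
      have hbc : Triangle.mk c₃ p₃ (β ≫ v) ∈ ξ :=
        hξ.base_change (Triangle.mk c p v) hT₂ β c₃ p₃ hmem₃
      have hsat : Triangle.mk c₂ p₂ w ∈ ξ := by
        refine hξ.saturated (Triangle.mk c₂ p₂ w) hmem₂ (d : B ⟶ (Triangle.mk c₂ p₂ w).obj₃)
          c₃ p₃ ?_ ⟨A, i, u, hT₁⟩
        have : (d : B ⟶ X) ≫ (Triangle.mk c₂ p₂ w).mor₃ = β ≫ v := hw.symm
        show Triangle.mk c₃ p₃ (d ≫ w) ∈ ξ; rw [← hw]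
        exact hbc
      exact hv E₂ c₂ p₂ w hsat
    -- β lifts through p
    have hβv : β ≫ v = 0 := by rw [hw, hw0, comp_zero]
    obtain ⟨l₀, hl₀⟩ : ∃ l₀ : B ⟶ E, β = l₀ ≫ p :=
      Triangle.coyoneda_exact₃ _ hT₂d β hβv
    -- the defect δ factors through c
    obtain ⟨γ, hγ⟩ : ∃ γ : A ⟶ Y, α - i ≫ l₀ = γ ≫ c := by
      apply Triangle.coyoneda_exact₂ _ hT₂d
      show (α - i ≫ l₀) ≫ p = 0; rw [Preadditive.sub_comp, Category.assoc]
      rw [← hl₀, hcomm, sub_self]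
    -- Step D: u ≫ γ⟦1⟧ = 0 via ExtVanish and cobase change
    have hγu : u ≫ (CategoryTheory.shiftFunctor C (1:ℤ)).map γ = 0 := by
      obtain ⟨F', c₄, p₄, hmem₄⟩ :=
        distinguished_cocone_triangle₂ (u ≫ (CategoryTheory.shiftFunctor C (1:ℤ)).map γ)
      have := hξ.cobase_change (Triangle.mk i d u) hT₁ γ c₄ p₄ hmem₄
      exact hv F' c₄ p₄ _ this
    -- Step E: extend γ along i
    obtain ⟨ν, hν⟩ : ∃ ν : B ⟶ Y, γ = i ≫ ν := by
      have hrot : (Triangle.mk i d u).invRotate ∈ distTriang C :=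
        inv_rot_of_distTriang _ hT₁d
      obtain ⟨ν, hν⟩ := Triangle.yoneda_exact₂ _ hrot
        (γ : (Triangle.mk i d u).invRotate.obj₂ ⟶ Y) (by
          show (-(shiftFunctor C (-1)).map u ≫ (shiftFunctorCompIsoId C (1:ℤ) (-1:ℤ) (by omega)).hom.app A) ≫ γ = 0
          simp only [Preadditive.neg_comp, Category.assoc, neg_eq_zero]
          have hnat := (shiftFunctorCompIsoId C (1:ℤ) (-1:ℤ)
            (by omega)).hom.naturality γ
          dsimp at hnat
          rw [← hnat, ← Functor.map_comp_assoc, hγu]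
          simp)
      exact ⟨ν, hν⟩
    refine ⟨l₀ + ν ≫ c, ?_, ?_⟩
    · rw [Preadditive.comp_add, ← Category.assoc, ← hν, ← hγ]; abel
    · rw [Preadditive.add_comp, Category.assoc]
      have : c ≫ p = 0 := comp_distTriang_mor_zero₁₂ _ hT₂d
      rw [this, comp_zero, add_zero, hl₀]
  · intro h E c p w hmem
    have hcontr : Triangle.mk (contractibleTriangle Y).mor₁ (contractibleTriangle Y).mor₂
        (contractibleTriangle Y).mor₃ ∈ ξ :=
      hξ.split_mem _ (contractible_distinguished Y) rfl
    obtain ⟨(l : E ⟶ Y), hl₁, _⟩ := h c p w hmem (contractibleTriangle Y).mor₁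
      (contractibleTriangle Y).mor₂ (contractibleTriangle Y).mor₃ hcontr
      (𝟙 Y) 0 (by rw [comp_zero]; exact (Category.id_comp _).symm)
    have hz : w ≫ (CategoryTheory.shiftFunctor C (1:ℤ)).map c = 0 :=
      comp_distTriang_mor_zero₃₁ _ (hξ.le_dist _ hmem)
    have hl₁' : c ≫ l = 𝟙 Y := hl₁
    calc w = w ≫ (CategoryTheory.shiftFunctor C (1:ℤ)).map (c ≫ l) := by
            rw [hl₁']; simp
      _ = (w ≫ (CategoryTheory.shiftFunctor C (1:ℤ)).map c) ≫
            (CategoryTheory.shiftFunctor C (1:ℤ)).map l := by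
            rw [Functor.map_comp, Category.assoc]
      _ = 0 := by rw [hz, zero_comp]

end Paper
end

section
/- Let ξ be a proper class of triangles in a triangulated category T. For all objects X, Y, the map sending the equivalence class of a triangle Y → E → X --w--> Y[1] in ξ to the morphism w is an injective group homomorphism Ext_ξ(X,Y) → Hom_T(X, Y[1]); in particular Ext_ξ(X,Y) is (isomorphic to) a subgroup of Hom_T(X, Y[1]), and if ξ is the class of all triangles then this map is an isomorphism. -/
open CategoryTheory CategoryTheory.Limits CategoryTheory.Pretriangulated

universe v u

variable {C : Type u} [Category.{v} C] [Preadditive C] [HasZeroObject C]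
  [HasShift C ℤ] [∀ n : ℤ, (CategoryTheory.shiftFunctor C n).Additive]
  [Pretriangulated C] [HasBinaryBiproducts C]

namespace Paper


private lemma extSet_zero (ξ : Set (Triangle C)) (hξ : IsProperClass ξ) (X Y : C) :
    (0 : X ⟶ Y⟦(1:ℤ)⟧) ∈ ExtSet ξ X Y :=
  ⟨Y ⊞ X, biprod.inl, biprod.snd,
    hξ.split_mem _ (binaryBiproductTriangle_distinguished Y X) rfl⟩

private lemma extSet_neg (ξ : Set (Triangle C)) (hξ : IsProperClass ξ) (X Y : C)
    {w : X ⟶ Y⟦(1:ℤ)⟧} (hw : w ∈ ExtSet ξ X Y) : -w ∈ ExtSet ξ X Y := by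
  obtain ⟨E, c, p, hT⟩ := hw
  refine ⟨E, -c, p, hξ.iso_closed _ hT _ ⟨?_⟩⟩
  exact Triangle.isoMk _ _ (-(Iso.refl Y)) (Iso.refl E) (Iso.refl X)
    (by change (c ≫ 𝟙 E : Y ⟶ E) = ((-𝟙 Y) ≫ (-c) : Y ⟶ E); simp)
    (by change (p ≫ 𝟙 X : E ⟶ X) = (𝟙 E ≫ p : E ⟶ X); simp)
    (by change (w ≫ (CategoryTheory.shiftFunctor C (1:ℤ)).map (-𝟙 Y) : X ⟶ Y⟦(1:ℤ)⟧) = (𝟙 X ≫ (-w) : X ⟶ Y⟦(1:ℤ)⟧); simp)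

private lemma extSet_add (ξ : Set (Triangle C)) (hξ : IsProperClass ξ) (X Y : C)
    {w₁ w₂ : X ⟶ Y⟦(1:ℤ)⟧} (h₁ : w₁ ∈ ExtSet ξ X Y) (h₂ : w₂ ∈ ExtSet ξ X Y) :
    w₁ + w₂ ∈ ExtSet ξ X Y := by
  obtain ⟨E₁, c₁, p₁, hT₁⟩ := h₁
  obtain ⟨E₂, c₂, p₂, hT₂⟩ := h₂
  have hC := hξ.coprod_closed _ hT₁ _ hT₂
  obtain ⟨E', u', v', hdist⟩ := distinguished_cocone_triangle₂
    ((biprod.lift (𝟙 X) (𝟙 X) : X ⟶ X ⊞ X) ≫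
      biprod.desc (w₁ ≫ (CategoryTheory.shiftFunctor C (1:ℤ)).map biprod.inl)
        (w₂ ≫ (CategoryTheory.shiftFunctor C (1:ℤ)).map biprod.inr))
  have hbc := hξ.base_change _ hC (biprod.lift (𝟙 X) (𝟙 X)) u' v' hdist
  obtain ⟨E'', u'', v'', hdist₂⟩ := distinguished_cocone_triangle₂
    (((biprod.lift (𝟙 X) (𝟙 X) : X ⟶ X ⊞ X) ≫
      biprod.desc (w₁ ≫ (CategoryTheory.shiftFunctor C (1:ℤ)).map biprod.inl)
        (w₂ ≫ (CategoryTheory.shiftFunctor C (1:ℤ)).map biprod.inr)) ≫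
      (CategoryTheory.shiftFunctor C (1:ℤ)).map (biprod.desc (𝟙 Y) (𝟙 Y)))
  have hcb := hξ.cobase_change _ hbc (biprod.desc (𝟙 Y) (𝟙 Y)) u'' v'' hdist₂
  have key : ((biprod.lift (𝟙 X) (𝟙 X) : X ⟶ X ⊞ X) ≫
      biprod.desc (w₁ ≫ (CategoryTheory.shiftFunctor C (1:ℤ)).map biprod.inl)
        (w₂ ≫ (CategoryTheory.shiftFunctor C (1:ℤ)).map biprod.inr)) ≫
      (CategoryTheory.shiftFunctor C (1:ℤ)).map (biprod.desc (𝟙 Y) (𝟙 Y)) = w₁ + w₂ := by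
    simp only [biprod.lift_desc, Category.id_comp, Preadditive.add_comp, Category.assoc,
      ← Functor.map_comp, biprod.inl_desc, biprod.inr_desc]
    simp
  refine ⟨E'', u'', v'', ?_⟩
  rw [← key]
  exact hcb

/-- The assignment sending a triangle `Y ⟶ E ⟶ X --w--> Y⟦1⟧` in `ξ` to `w` is an
injective group homomorphism: two triangles in `ξ` with the same `w` are equivalent,
the set of such `w` is a subgroup of `Hom(X, Y⟦1⟧)`, and if `ξ` is the class of all
distinguished triangles it is everything. -/
theorem extSet_is_subgroup (ξ : Set (Triangle C)) (hξ : IsProperClass ξ) (X Y : C) :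
    (∀ (E : C) (c : Y ⟶ E) (p : E ⟶ X) (E' : C) (c' : Y ⟶ E') (p' : E' ⟶ X)
      (w : X ⟶ Y⟦(1:ℤ)⟧), Triangle.mk c p w ∈ ξ → Triangle.mk c' p' w ∈ ξ →
      ∃ g : E ⟶ E', c ≫ g = c' ∧ g ≫ p' = p) ∧
    (∃ S : AddSubgroup (X ⟶ Y⟦(1:ℤ)⟧), (S : Set (X ⟶ Y⟦(1:ℤ)⟧)) = ExtSet ξ X Y) ∧
    (ξ = (distTriang C) → ExtSet ξ X Y = Set.univ) := by
  refine ⟨?_, ⟨⟨⟨⟨ExtSet ξ X Y, ?_⟩, ?_⟩, ?_⟩, rfl⟩, ?_⟩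
  · intro E c p E' c' p' w hT hT'
    obtain ⟨g, hg₁, hg₂⟩ := complete_distinguished_triangle_morphism₂
      (Triangle.mk c p w) (Triangle.mk c' p' w) (hξ.le_dist _ hT) (hξ.le_dist _ hT')
      (𝟙 Y) (𝟙 X) (by change (w ≫ (CategoryTheory.shiftFunctor C (1:ℤ)).map (𝟙 Y) : X ⟶ Y⟦(1:ℤ)⟧) = (𝟙 X ≫ w : X ⟶ Y⟦(1:ℤ)⟧); simp)
    refine ⟨g, ?_, ?_⟩
    · have h1 : c ≫ g = 𝟙 Y ≫ c' := hg₁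
      exact h1.trans (Category.id_comp _)
    · have h2 : p ≫ 𝟙 X = g ≫ p' := hg₂
      exact h2.symm.trans (Category.comp_id _)
  · exact fun ha hb => extSet_add ξ hξ X Y ha hb
  · exact extSet_zero ξ hξ X Y
  · exact fun h => extSet_neg ξ hξ X Y h
  · intro hall
    ext w
    simp only [Set.mem_univ, iff_true]
    obtain ⟨E, c, p, hd⟩ := distinguished_cocone_triangle₂ w
    exact ⟨E, c, p, hall ▸ hd⟩


end Paper
end

section
/- Let ξ be a proper class of triangles in a triangulated category T, X₁ --f--> X --g--> X₂ --h--> X₁[1] a triangle in ξ, and Y an object. Then there is an exact sequence of abelian groups Hom(X₂,Y) → Hom(X,Y) → Hom(X₁,Y) → Ext_ξ(X₂,Y) → Ext_ξ(X,Y) → Ext_ξ(X₁,Y), where the connecting map sends α : X₁ → Y to the class of the triangle Y → E₂ → X₂ --α[1]∘h--> Y[1], and the maps between Ext groups are given by base change. -/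
open CategoryTheory CategoryTheory.Limits CategoryTheory.Pretriangulated

universe v u

variable {C : Type u} [Category.{v} C] [Preadditive C] [HasZeroObject C]
  [HasShift C ℤ] [∀ n : ℤ, (CategoryTheory.shiftFunctor C n).Additive]
  [Pretriangulated C] [HasBinaryBiproducts C]

namespace Paper


/-- The six-term exact sequence
`Hom(X₂,Y) → Hom(X,Y) → Hom(X₁,Y) → Ext_ξ(X₂,Y) → Ext_ξ(X,Y) → Ext_ξ(X₁,Y)`
associated with a triangle `X₁ --f--> X --g--> X₂ --h--> X₁⟦1⟧` in `ξ`, with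
`Ext_ξ` realized inside the `Hom` groups via the connecting morphisms. -/
theorem ext_six_term_exact (ξ : Set (Triangle C)) (hξ : IsProperClass ξ)
    {X₁ X X₂ : C} (f : X₁ ⟶ X) (g : X ⟶ X₂) (h : X₂ ⟶ X₁⟦(1:ℤ)⟧)
    (hT : Triangle.mk f g h ∈ ξ) (Y : C) :
    (∀ α : X₁ ⟶ Y, h ≫ (CategoryTheory.shiftFunctor C (1:ℤ)).map α ∈ ExtSet ξ X₂ Y) ∧
    (∀ w ∈ ExtSet ξ X₂ Y, g ≫ w ∈ ExtSet ξ X Y) ∧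
    (∀ w ∈ ExtSet ξ X Y, f ≫ w ∈ ExtSet ξ X₁ Y) ∧
    (∀ b : X ⟶ Y, f ≫ b = 0 ↔ ∃ a : X₂ ⟶ Y, b = g ≫ a) ∧
    (∀ α : X₁ ⟶ Y,
      h ≫ (CategoryTheory.shiftFunctor C (1:ℤ)).map α = 0 ↔ ∃ b : X ⟶ Y, α = f ≫ b) ∧
    (∀ w ∈ ExtSet ξ X₂ Y,
      g ≫ w = 0 ↔ ∃ α : X₁ ⟶ Y, w = h ≫ (CategoryTheory.shiftFunctor C (1:ℤ)).map α) ∧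
    (∀ w ∈ ExtSet ξ X Y, f ≫ w = 0 ↔ ∃ w' ∈ ExtSet ξ X₂ Y, w = g ≫ w') := by
  have hdistT : Triangle.mk f g h ∈ distTriang C := hξ.le_dist _ hT
  refine ⟨?_, ?_, ?_, ?_, ?_, ?_, ?_⟩
  · -- connecting map lands in ExtSet
    intro α
    obtain ⟨E, u, v, hdist⟩ :=
      distinguished_cocone_triangle₂ (h ≫ (CategoryTheory.shiftFunctor C (1:ℤ)).map α)
    exact ⟨E, u, v, hξ.cobase_change _ hT α u v hdist⟩
  · intro w hw
    obtain ⟨E, c, p, hwξ⟩ := hw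
    obtain ⟨E', u, v, hdist⟩ := distinguished_cocone_triangle₂ (g ≫ w)
    exact ⟨E', u, v, hξ.base_change _ hwξ g u v hdist⟩
  · intro w hw
    obtain ⟨E, c, p, hwξ⟩ := hw
    obtain ⟨E', u, v, hdist⟩ := distinguished_cocone_triangle₂ (f ≫ w)
    exact ⟨E', u, v, hξ.base_change _ hwξ f u v hdist⟩
  · intro b
    constructor
    · intro hb
      exact Pretriangulated.Triangle.yoneda_exact₂ _ hdistT b hb
    · rintro ⟨a, rfl⟩
      have hfg : f ≫ g = 0 := comp_distTriang_mor_zero₁₂ _ hdistT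
      rw [← Category.assoc, hfg, zero_comp]
  · intro α
    constructor
    · intro hα
      obtain ⟨d, hd⟩ := Pretriangulated.Triangle.yoneda_exact₃ _
        (rot_of_distTriang _ hdistT) ((CategoryTheory.shiftFunctor C (1:ℤ)).map α) hα
      obtain ⟨b, rfl⟩ := (CategoryTheory.shiftFunctor C (1:ℤ)).map_surjective d
      refine ⟨-b, (CategoryTheory.shiftFunctor C (1:ℤ)).map_injective ?_⟩
      refine hd.trans ?_
      simp [Triangle.rotate]
      exact (Preadditive.neg_comp _ _).trans
        ((congrArg Neg.neg ((CategoryTheory.shiftFunctor C (1:ℤ)).map_comp f b).symm).trans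
          (((CategoryTheory.shiftFunctor C (1:ℤ)).map_neg).symm.trans
            (congrArg (CategoryTheory.shiftFunctor C (1:ℤ)).map (Preadditive.comp_neg f b).symm)))
    · rintro ⟨b, rfl⟩
      rw [Functor.map_comp, ← Category.assoc]
      have : h ≫ (CategoryTheory.shiftFunctor C (1:ℤ)).map f = 0 :=
        comp_distTriang_mor_zero₃₁ _ hdistT
      rw [this, zero_comp]
  · intro w _
    constructor
    · intro hw
      obtain ⟨d, hd⟩ := Pretriangulated.Triangle.yoneda_exact₃ _ hdistT w hw
      obtain ⟨α, rfl⟩ := (CategoryTheory.shiftFunctor C (1:ℤ)).map_surjective d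
      exact ⟨α, hd⟩
    · rintro ⟨α, rfl⟩
      have hgh : g ≫ h = 0 := comp_distTriang_mor_zero₂₃ _ hdistT
      rw [← Category.assoc, hgh, zero_comp]
  · intro w hw
    constructor
    · intro hfw
      obtain ⟨w', hw'⟩ := Pretriangulated.Triangle.yoneda_exact₂ _ hdistT w hfw
      obtain ⟨E, c, p, hwξ⟩ := hw
      rw [hw'] at hwξ
      obtain ⟨E', u, v, hdist⟩ := distinguished_cocone_triangle₂ w'
      refine ⟨w', ⟨E', u, v, ?_⟩, hw'⟩
      exact hξ.saturated _ hdist g c p hwξ ⟨X₁, f, h, hT⟩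
    · rintro ⟨w', _, rfl⟩
      have hfg : f ≫ g = 0 := comp_distTriang_mor_zero₁₂ _ hdistT
      rw [← Category.assoc, hfg, zero_comp]


end Paper
end

section
/- Let ξ be a proper class of triangles in a triangulated category T and (X,Y) a complete cotorsion pair with respect to ξ. Then the following are equivalent: (1) (X,Y) is hereditary; (2) X is closed under homotopy kernels of ξ-proper epimorphisms (if K → X₁ → X₂ → K[1] is in ξ with X₁,X₂ ∈ X then K ∈ X); (3) Y is closed under homotopy cokernels of ξ-proper monomorphisms (if Y₁ → Y₂ → C → Y₁[1] is in ξ with Y₁,Y₂ ∈ Y then C ∈ Y). -/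
open CategoryTheory CategoryTheory.Limits CategoryTheory.Pretriangulated

universe v u

variable {C : Type u} [Category.{v} C] [Preadditive C] [HasZeroObject C]
  [HasShift C ℤ] [∀ n : ℤ, (CategoryTheory.shiftFunctor C n).Additive]
  [Pretriangulated C] [HasBinaryBiproducts C]

namespace Paper


/-- `(𝒳, 𝒴)` is a cotorsion pair with respect to `ξ`. -/
def IsCotorsionPair (ξ : Set (Triangle C)) (𝒳 𝒴 : Set C) : Prop :=
  𝒴 = {Z | ∀ A ∈ 𝒳, ExtVanish ξ A Z} ∧ 𝒳 = {Z | ∀ B ∈ 𝒴, ExtVanish ξ Z B}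

/-- Completeness of a cotorsion pair `(𝒳, 𝒴)` with respect to `ξ`. -/
def IsComplete (ξ : Set (Triangle C)) (𝒳 𝒴 : Set C) : Prop :=
  ∀ T' : C,
    (∃ (Y' X' : C) (a : Y' ⟶ X') (b : X' ⟶ T') (c : T' ⟶ Y'⟦(1:ℤ)⟧),
      Triangle.mk a b c ∈ ξ ∧ X' ∈ 𝒳 ∧ Y' ∈ 𝒴) ∧
    (∃ (Y'' X'' : C) (a : T' ⟶ Y'') (b : Y'' ⟶ X'') (c : X'' ⟶ T'⟦(1:ℤ)⟧),
      Triangle.mk a b c ∈ ξ ∧ X'' ∈ 𝒳 ∧ Y'' ∈ 𝒴)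

/-- `𝒳` is closed under homotopy kernels of `ξ`-proper epimorphisms. -/
def ClosedHoKer (ξ : Set (Triangle C)) (𝒳 : Set C) : Prop :=
  ∀ T ∈ ξ, T.obj₂ ∈ 𝒳 → T.obj₃ ∈ 𝒳 → T.obj₁ ∈ 𝒳

/-- `𝒴` is closed under homotopy cokernels of `ξ`-proper monomorphisms. -/
def ClosedHoCoker (ξ : Set (Triangle C)) (𝒴 : Set C) : Prop :=
  ∀ T ∈ ξ, T.obj₁ ∈ 𝒴 → T.obj₂ ∈ 𝒴 → T.obj₃ ∈ 𝒴

/-- A cotorsion pair is hereditary if both closure conditions hold. -/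
def IsHereditary (ξ : Set (Triangle C)) (𝒳 𝒴 : Set C) : Prop :=
  ClosedHoKer ξ 𝒳 ∧ ClosedHoCoker ξ 𝒴

section Aux

set_option linter.unusedSectionVars false

variable {ξ : Set (Triangle C)}

lemma ext_along_mor₁ (T : Triangle C) (hT : T ∈ distTriang C) {X : C} (f : T.obj₁ ⟶ X)
    (hf : T.mor₃ ≫ f⟦(1:ℤ)⟧' = 0) : ∃ g : T.obj₂ ⟶ X, f = T.mor₁ ≫ g := by
  apply Triangle.yoneda_exact₂ _ (inv_rot_of_distTriang _ hT) f
  dsimp [Triangle.invRotate]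
  change (-((shiftFunctor C (-1:ℤ)).map T.mor₃ ≫
    (shiftFunctorCompIsoId C (1:ℤ) (-1:ℤ) (by omega)).hom.app T.obj₁)) ≫ f = 0
  have h2 : (shiftFunctorCompIsoId C (1:ℤ) (-1:ℤ) (by omega)).hom.app T.obj₁ ≫ f
      = (shiftFunctor C (-1:ℤ)).map ((shiftFunctor C (1:ℤ)).map f) ≫
        (shiftFunctorCompIsoId C (1:ℤ) (-1:ℤ) (by omega)).hom.app X :=
    ((shiftFunctorCompIsoId C (1:ℤ) (-1:ℤ) (by omega)).hom.naturality f).symm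
  rw [Preadditive.neg_comp, neg_eq_zero, Category.assoc, h2, ← Category.assoc,
    ← Functor.map_comp, hf, Functor.map_zero, zero_comp]

lemma split_mem_xi (hξ : IsProperClass ξ) (X Z : C) :
    Triangle.mk (biprod.inl : X ⟶ X ⊞ Z) biprod.snd 0 ∈ ξ :=
  hξ.split_mem _ (binaryBiproductTriangle_distinguished X Z) rfl

lemma extSet_precomp (hξ : IsProperClass ξ) {A B : C} {w : A ⟶ B⟦(1:ℤ)⟧}
    (hw : w ∈ ExtSet ξ A B) {A' : C} (α : A' ⟶ A) : α ≫ w ∈ ExtSet ξ A' B := by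
  obtain ⟨E, c, p, hT⟩ := hw
  obtain ⟨Y', u', v', hd⟩ := distinguished_cocone_triangle₂ (α ≫ w)
  exact ⟨Y', u', v', hξ.base_change _ hT α u' v' hd⟩

lemma extSet_postcomp (hξ : IsProperClass ξ) {A B : C} {w : A ⟶ B⟦(1:ℤ)⟧}
    (hw : w ∈ ExtSet ξ A B) {B' : C} (β : B ⟶ B') : w ≫ β⟦(1:ℤ)⟧' ∈ ExtSet ξ A B' := by
  obtain ⟨E, c, p, hT⟩ := hw
  obtain ⟨Y', u', v', hd⟩ := distinguished_cocone_triangle₂ (w ≫ β⟦(1:ℤ)⟧')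
  exact ⟨Y', u', v', hξ.cobase_change _ hT β u' v' hd⟩

lemma vanish_of_mem {A B : C} {w : A ⟶ B⟦(1:ℤ)⟧} (hv : ExtVanish ξ A B)
    (hw : w ∈ ExtSet ξ A B) : w = 0 := by
  obtain ⟨E, c, p, h⟩ := hw
  exact hv E c p w h

/-- Composition of `ξ`-proper epimorphisms: any distinguished triangle over the
composite is in `ξ`. -/
lemma comp_epi_mem (hξ : IsProperClass ξ) {E A X K : C} (p : E ⟶ A) (φ : X ⟶ E)
    (hp : ProperEpi ξ p) (hφ : ProperEpi ξ φ)
    (ι : K ⟶ X) (δ : A ⟶ K⟦(1:ℤ)⟧) (hG : Triangle.mk ι (φ ≫ p) δ ∈ distTriang C) :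
    Triangle.mk ι (φ ≫ p) δ ∈ ξ := by
  have h0 : φ ≫ p ≫ δ = 0 := by
    rw [← Category.assoc]
    exact comp_distTriang_mor_zero₂₃ _ hG
  obtain ⟨N, u', v', hH⟩ := distinguished_cocone_triangle₂ (p ≫ δ)
  have hsplit : Triangle.mk (biprod.inl : K ⟶ K ⊞ X) biprod.snd (φ ≫ p ≫ δ) ∈ ξ := by
    rw [h0]; exact split_mem_xi hξ K X
  have hHξ : Triangle.mk u' v' (p ≫ δ) ∈ ξ :=
    hξ.saturated _ hH φ biprod.inl biprod.snd hsplit hφ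
  exact hξ.saturated _ hG p u' v' hHξ hp

/-- `ξ` is cosaturated: if the pushout of a distinguished triangle along a
`ξ`-proper monomorphism is in `ξ`, then the triangle is in `ξ`. -/
lemma cosat (hξ : IsProperClass ξ) {B B₀ B₁ Y Q : C}
    (γ : B ⟶ B₀) (l : B₀ ⟶ B₁) (μ : B₁ ⟶ B⟦(1:ℤ)⟧) (hV : Triangle.mk γ l μ ∈ ξ)
    (m : B ⟶ Y) (n : Y ⟶ Q) (θ : Q ⟶ B⟦(1:ℤ)⟧) (hW : Triangle.mk m n θ ∈ distTriang C)
    {Y₀ : C} (m' : B₀ ⟶ Y₀) (n' : Y₀ ⟶ Q)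
    (hW₀ : Triangle.mk m' n' (θ ≫ γ⟦(1:ℤ)⟧') ∈ ξ) :
    Triangle.mk m n θ ∈ ξ := by
  have h0 : (n' ≫ θ) ≫ γ⟦(1:ℤ)⟧' = 0 := by
    rw [Category.assoc]
    exact comp_distTriang_mor_zero₂₃ _ (hξ.le_dist _ hW₀)
  obtain ⟨t, ht⟩ := Triangle.coyoneda_exact₁ _ (hξ.le_dist _ hV) (n' ≫ θ) h0
  obtain ⟨P, u', v', hd⟩ := distinguished_cocone_triangle₂ (t ≫ μ)
  have hPξ : Triangle.mk u' v' (t ≫ μ) ∈ ξ := hξ.base_change _ hV t u' v' hd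
  have hPξ' : Triangle.mk u' v' (n' ≫ θ) ∈ ξ := by
    have ht' : n' ≫ θ = t ≫ μ := ht
    rw [ht']; exact hPξ
  exact hξ.saturated _ hW n' u' v' hPξ' ⟨B₀, m', θ ≫ γ⟦(1:ℤ)⟧', hW₀⟩

/-- Composition of `ξ`-proper monomorphisms: any distinguished triangle over the
composite is in `ξ`. -/
lemma comp_mono_mem (hξ : IsProperClass ξ) {B M Y Q : C} (c : B ⟶ M) (a : M ⟶ Y)
    (hc : ProperMono ξ c) (ha : ProperMono ξ a)
    (n : Y ⟶ Q) (θ : Q ⟶ B⟦(1:ℤ)⟧) (hW : Triangle.mk (c ≫ a) n θ ∈ distTriang C) :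
    Triangle.mk (c ≫ a) n θ ∈ ξ := by
  obtain ⟨K, p, w, hS⟩ := hc
  obtain ⟨XM, b, ρ, hR⟩ := ha
  have h0 : (θ ≫ c⟦(1:ℤ)⟧') ≫ a⟦(1:ℤ)⟧' = 0 := by
    rw [Category.assoc, ← Functor.map_comp]
    exact comp_distTriang_mor_zero₃₁ _ hW
  obtain ⟨Y₀, m₀, n₀, hW₀d⟩ := distinguished_cocone_triangle₂ (θ ≫ c⟦(1:ℤ)⟧')
  have hsplit : Triangle.mk (biprod.inl : Y ⟶ Y ⊞ Q) biprod.snd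
      ((θ ≫ c⟦(1:ℤ)⟧') ≫ a⟦(1:ℤ)⟧') ∈ ξ := by
    rw [h0]; exact split_mem_xi hξ Y Q
  have hW₀ : Triangle.mk m₀ n₀ (θ ≫ c⟦(1:ℤ)⟧') ∈ ξ :=
    cosat hξ a b ρ hR m₀ n₀ (θ ≫ c⟦(1:ℤ)⟧') hW₀d biprod.inl biprod.snd hsplit
  exact cosat hξ c p w hS (c ≫ a) n θ hW m₀ n₀ hW₀

/-- If `𝒳` is closed under hokernels of `ξ`-proper epimorphisms, then `𝒴` is closed
under hocokernels of `ξ`-proper monomorphisms. -/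
lemma hoKer_to_hoCoker {𝒳 𝒴 : Set C} (hξ : IsProperClass ξ)
    (hcp : IsCotorsionPair ξ 𝒳 𝒴) (hcom : IsComplete ξ 𝒳 𝒴)
    (hker : ClosedHoKer ξ 𝒳) : ClosedHoCoker ξ 𝒴 := by
  intro T hT hY₁ hY₂
  rw [hcp.1]
  intro A hA E c p w hS
  have hA' : ∀ B ∈ 𝒴, ExtVanish ξ A B := fun B hB => (hcp.2 ▸ hA) B hB
  obtain ⟨⟨YE, XE, j, φ, ρ, hR, hXE, hYE⟩, -⟩ := hcom E
  obtain ⟨K, ι, δ, hGd⟩ := distinguished_cocone_triangle₁ (φ ≫ p)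
  have hG : Triangle.mk ι (φ ≫ p) δ ∈ ξ :=
    comp_epi_mem hξ p φ ⟨T.obj₃, c, w, hS⟩ ⟨YE, j, ρ, hR⟩ ι δ hGd
  have hK : K ∈ 𝒳 := hker _ hG hXE hA
  have hK' : ∀ B ∈ 𝒴, ExtVanish ξ K B := fun B hB => (hcp.2 ▸ hK) B hB
  have hψw : (φ ≫ p) ≫ w = 0 := by
    have hpw : p ≫ w = 0 := comp_distTriang_mor_zero₂₃ _ (hξ.le_dist _ hS)
    rw [Category.assoc, hpw, comp_zero]
  obtain ⟨g', hg'⟩ := Triangle.yoneda_exact₃ _ hGd w hψw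
  set z : K ⟶ T.obj₃ := (shiftFunctor C (1:ℤ)).preimage g' with hzdef
  have hz : z⟦(1:ℤ)⟧' = g' := (shiftFunctor C (1:ℤ)).map_preimage g'
  have hzh : z ≫ T.mor₃ = 0 := by
    apply vanish_of_mem (hK' _ hY₁)
    exact extSet_precomp hξ ⟨T.obj₂, T.mor₁, T.mor₂, hT⟩ z
  obtain ⟨s, hs⟩ := Triangle.coyoneda_exact₃ _ (hξ.le_dist _ hT) z hzh
  have hδs : δ ≫ s⟦(1:ℤ)⟧' = 0 := by
    apply vanish_of_mem (hA' _ hY₂)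
    exact extSet_postcomp hξ ⟨XE, ι, φ ≫ p, hG⟩ s
  calc w = δ ≫ z⟦(1:ℤ)⟧' := by rw [hz]; exact hg'
    _ = δ ≫ s⟦(1:ℤ)⟧' ≫ (T.mor₂)⟦(1:ℤ)⟧' := by rw [← Functor.map_comp, ← hs]
    _ = 0 := by rw [← Category.assoc, hδs, zero_comp]

/-- If `𝒴` is closed under hocokernels of `ξ`-proper monomorphisms, then `𝒳` is closed
under hokernels of `ξ`-proper epimorphisms. -/
lemma hoCoker_to_hoKer {𝒳 𝒴 : Set C} (hξ : IsProperClass ξ)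
    (hcp : IsCotorsionPair ξ 𝒳 𝒴) (hcom : IsComplete ξ 𝒳 𝒴)
    (hcoker : ClosedHoCoker ξ 𝒴) : ClosedHoKer ξ 𝒳 := by
  intro T hT hX₂ hX₃
  rw [hcp.2]
  intro B hB M c p w hS
  have hB' : ∀ A ∈ 𝒳, ExtVanish ξ A B := fun A hA => (hcp.1 ▸ hB) A hA
  obtain ⟨-, ⟨YM, XM, a, b, ρ, hR, hXM, hYM⟩⟩ := hcom M
  obtain ⟨Q, n, θ, hWd⟩ := distinguished_cocone_triangle (c ≫ a)
  have hW : Triangle.mk (c ≫ a) n θ ∈ ξ :=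
    comp_mono_mem hξ c a ⟨T.obj₁, p, w, hS⟩ ⟨XM, b, ρ, hR⟩ n θ hWd
  have hQ : Q ∈ 𝒴 := hcoker _ hW hB hYM
  have hwm : w ≫ (c ≫ a)⟦(1:ℤ)⟧' = 0 := by
    have hwc : w ≫ c⟦(1:ℤ)⟧' = 0 := comp_distTriang_mor_zero₃₁ _ (hξ.le_dist _ hS)
    rw [Functor.map_comp, ← Category.assoc, hwc, zero_comp]
  obtain ⟨z, hzw⟩ := Triangle.coyoneda_exact₁ _ hWd w hwm
  have hδz : T.mor₃ ≫ z⟦(1:ℤ)⟧' = 0 := by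
    apply vanish_of_mem ((hcp.2 ▸ hX₃) Q hQ)
    exact extSet_postcomp hξ ⟨T.obj₂, T.mor₁, T.mor₂, hT⟩ z
  obtain ⟨s, hsz⟩ := ext_along_mor₁ T (hξ.le_dist _ hT) z hδz
  have hsθ : s ≫ (Triangle.mk (c ≫ a) n θ).mor₃ = 0 := by
    apply vanish_of_mem ((hcp.2 ▸ hX₂) B hB)
    exact extSet_precomp hξ ⟨YM, c ≫ a, n, hW⟩ s
  rw [hzw, hsz, Category.assoc, hsθ, comp_zero]
  rfl

end Aux

/-- For a complete cotorsion pair `(𝒳, 𝒴)` with respect to `ξ`: hereditary ↔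
`𝒳` closed under hokernels of `ξ`-proper epis ↔ `𝒴` closed under hocokernels
of `ξ`-proper monos. -/
theorem hereditary_characterization (ξ : Set (Triangle C)) (hξ : IsProperClass ξ)
    (𝒳 𝒴 : Set C) (hcp : IsCotorsionPair ξ 𝒳 𝒴) (hcom : IsComplete ξ 𝒳 𝒴) :
    (IsHereditary ξ 𝒳 𝒴 ↔ ClosedHoKer ξ 𝒳) ∧
    (IsHereditary ξ 𝒳 𝒴 ↔ ClosedHoCoker ξ 𝒴) := by
  refine ⟨⟨fun h => h.1, fun h => ⟨h, hoKer_to_hoCoker hξ hcp hcom h⟩⟩,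
    ⟨fun h => h.2, fun h => ⟨hoCoker_to_hoKer hξ hcp hcom h, h⟩⟩⟩

end Paper
end
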